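/- arXiv:1309.7704 — 4 statements merged into one kernel-verified Lean document; each statement's English description precedes it below -/
import Mathlib

section
/- In the C*-algebra O_{H_{M,N}} generated by Sᵢ (i=1,…,M), Tₖ (k=1,…,N) and commuting projections e_{(i,k)} summing to 1, subject to ∑ᵢSᵢSᵢ* + ∑ₖTₖTₖ* = 1, Sᵢ*Sⱼ = δ_{ij}, Tₖ*Tₗ = δ_{kl}, e_{(i,k)}Sⱼ = δ_{ij}∑_{h=1}^M Sⱼ e_{(h,k)} and e_{(i,k)}Tₗ = δ_{kl}∑_{m=1}^N Tₗ e_{(i,m)}, the elements S_{(i,k)} := e_{(i,k)}Sᵢ and T_{(i,k)} := e_{(i,k)}Tₖ satisfy: e_{(i,k)} = S_{(i,k)}S_{(i,k)}* + T_{(i,k)}T_{(i,k)}*. -/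
/-! Write `e = e · 1 · e` and expand `1 = ∑ Sⱼ Sⱼ* + ∑ Tₗ Tₗ*`. Since `e` is self-adjoint each
term is `(e Sⱼ)(e Sⱼ)*` or `(e Tₗ)(e Tₗ)*`, and the commutation relations kill `e_{(i,k)} Sⱼ`
for `j ≠ i` and `e_{(i,k)} Tₗ` for `l ≠ k`. -/

namespace IsStarProjection

variable {R : Type*} [Semiring R] [StarMul R] {p : R}

theorem eq_sum_mul_mul_star {ι : Type*} (hp : IsStarProjection p) (s : Finset ι) (a : ι → R)
    (ha : ∑ j ∈ s, a j * star (a j) = 1) :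
    p = ∑ j ∈ s, p * a j * star (p * a j) := by
  calc p = p * (∑ j ∈ s, a j * star (a j)) * p := by rw [ha, mul_one, hp.isIdempotentElem.eq]
    _ = ∑ j ∈ s, p * a j * star (p * a j) := by
      rw [Finset.mul_sum, Finset.sum_mul]
      refine Finset.sum_congr rfl fun j _ => ?_
      rw [star_mul, hp.isSelfAdjoint.star_eq, mul_assoc, mul_assoc, mul_assoc]

theorem eq_mul_mul_star_add_mul_mul_star {ι κ : Type*} [Fintype ι] [Fintype κ]
    (hp : IsStarProjection p) {a : ι → R} {b : κ → R}
    (hab : ∑ j, a j * star (a j) + ∑ l, b l * star (b l) = 1)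
    (i : ι) (ha : ∀ j ≠ i, p * a j = 0) (k : κ) (hb : ∀ l ≠ k, p * b l = 0) :
    p = p * a i * star (p * a i) + p * b k * star (p * b k) := by
  have hp_eq := hp.eq_sum_mul_mul_star Finset.univ (Sum.elim a b)
    (by rwa [Fintype.sum_sum_type])
  rw [Fintype.sum_sum_type] at hp_eq
  simp only [Sum.elim_inl, Sum.elim_inr] at hp_eq
  rwa [Fintype.sum_eq_single i fun j hj => by rw [ha j hj, zero_mul],
    Fintype.sum_eq_single k fun l hl => by rw [hb l hl, zero_mul]] at hp_eq

end IsStarProjection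

theorem stmt10_general (D : Type*) [CStarAlgebra D] (M N : ℕ)
    (S : Fin M → D) (T : Fin N → D) (e : Fin M → Fin N → D)
    (heproj : ∀ (i : Fin M) (k : Fin N), e i k * e i k = e i k ∧ star (e i k) = e i k)
    (hsum : (∑ i, S i * star (S i)) + (∑ k, T k * star (T k)) = 1)
    (heS : ∀ (i : Fin M) (k : Fin N) (j : Fin M),
      e i k * S j = if i = j then ∑ h, S j * e h k else 0)
    (heT : ∀ (i : Fin M) (k : Fin N) (l : Fin N),
      e i k * T l = if k = l then ∑ m, T l * e i m else 0) :
    ∀ (i : Fin M) (k : Fin N),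
      e i k = (e i k * S i) * star (e i k * S i) + (e i k * T k) * star (e i k * T k) := by
  intro i k
  have hproj : IsStarProjection (e i k) := ⟨(heproj i k).1, (heproj i k).2⟩
  exact hproj.eq_mul_mul_star_add_mul_mul_star hsum
    i (fun j hj => by rw [heS, if_neg (Ne.symm hj)])
    k (fun l hl => by rw [heT, if_neg (Ne.symm hl)])

/-- In the C*-algebra generated by `Sᵢ`, `Tₖ` and commuting projections `e_{(i,k)}`
summing to `1` subject to the listed relations, the elements `S_{(i,k)} = e_{(i,k)}Sᵢ` and
`T_{(i,k)} = e_{(i,k)}Tₖ` satisfy `e_{(i,k)} = S_{(i,k)}S_{(i,k)}* + T_{(i,k)}T_{(i,k)}*`. -/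
theorem stmt10 (D : Type*) [CStarAlgebra D] (M N : ℕ) (hM : 1 < M) (hN : 1 < N)
    (S : Fin M → D) (T : Fin N → D) (e : Fin M → Fin N → D)
    (heproj : ∀ (i : Fin M) (k : Fin N), e i k * e i k = e i k ∧ star (e i k) = e i k)
    (heorth : ∀ (i j : Fin M) (k l : Fin N), (i, k) ≠ (j, l) → e i k * e j l = 0)
    (hesum : ∑ i, ∑ k, e i k = 1)
    (hSisom : ∀ i j : Fin M, star (S i) * S j = if i = j then 1 else 0)
    (hTisom : ∀ k l : Fin N, star (T k) * T l = if k = l then 1 else 0)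
    (hsum : (∑ i, S i * star (S i)) + (∑ k, T k * star (T k)) = 1)
    (heS : ∀ (i : Fin M) (k : Fin N) (j : Fin M),
      e i k * S j = if i = j then ∑ h, S j * e h k else 0)
    (heT : ∀ (i : Fin M) (k : Fin N) (l : Fin N),
      e i k * T l = if k = l then ∑ m, T l * e i m else 0) :
    ∀ (i : Fin M) (k : Fin N),
      e i k = (e i k * S i) * star (e i k * S i) + (e i k * T k) * star (e i k * T k) :=
  stmt10_general D M N S T e heproj hsum heS heT
end

section
/- With the same relations as in the previous setting, the partial isometries S_{(i,k)} = e_{(i,k)}Sᵢ satisfy S_{(i,k)}*S_{(i,k)} = ∑_{j=1}^M (S_{(j,k)}S_{(j,k)}* + T_{(j,k)}T_{(j,k)}*), and T_{(i,k)}*T_{(i,k)} = ∑_{l=1}^N (S_{(i,l)}S_{(i,l)}* + T_{(i,l)}T_{(i,l)}*). -/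
/-! The relation `e_{(i,k)} Sᵢ = Sᵢ ∑ₕ e_{(h,k)}` moves the projection past the isometry,
so `S_{(i,k)}* S_{(i,k)} = Sᵢ* e_{(i,k)} Sᵢ = ∑ₕ e_{(h,k)}`.
On the other side, conjugating the Cuntz relation `∑ SᵢSᵢ* + ∑ TₖTₖ* = 1` by `e_{(j,k)}`
kills every term except those of `Sⱼ` and `Tₖ`, which gives
`e_{(j,k)} = S_{(j,k)}S_{(j,k)}* + T_{(j,k)}T_{(j,k)}*`. Summing over `j` (resp. `l` for
`T_{(i,k)}`) yields both identities. -/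

open Finset

lemma IsStarProjection.star_mul_mul_self_eq_of_mul_eq {D : Type*} [Monoid D] [StarMul D]
    {p s q : D} (hp : IsStarProjection p) (hs : star s * s = 1) (hps : p * s = s * q) :
    star (p * s) * (p * s) = q := by
  calc star (p * s) * (p * s) = star s * (p * p) * s := by
        rw [star_mul, hp.isSelfAdjoint.star_eq]; simp only [mul_assoc]
    _ = q := by rw [hp.isIdempotentElem.eq, mul_assoc, hps, ← mul_assoc, hs, one_mul]

section Conjugation

variable {D : Type*} [Semiring D] [StarRing D] {ι : Type*} [Fintype ι]

lemma IsSelfAdjoint.mul_sum_mul_star_mul_eq_single {p : D} (hp : IsSelfAdjoint p)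
    (x : ι → D) (j : ι) (hx : ∀ i ≠ j, p * x i = 0) :
    p * (∑ i, x i * star (x i)) * p = p * x j * star (p * x j) := by
  have hconj : ∀ i, p * (x i * star (x i)) * p = p * x i * star (p * x i) := fun i => by
    rw [star_mul, hp.star_eq]; simp only [mul_assoc]
  rw [mul_sum, sum_mul, sum_congr rfl fun i _ => hconj i]
  exact sum_eq_single_of_mem j (mem_univ j) fun i _ hij => by rw [hx i hij, zero_mul]

lemma IsStarProjection.eq_add_of_sum_add_sum_eq_one {κ : Type*} [Fintype κ]
    {p : D} (hp : IsStarProjection p) {x : ι → D} {y : κ → D}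
    (hxy : ∑ i, x i * star (x i) + ∑ k, y k * star (y k) = 1) {i₀ : ι} {k₀ : κ}
    (hx : ∀ i ≠ i₀, p * x i = 0) (hy : ∀ k ≠ k₀, p * y k = 0) :
    p = p * x i₀ * star (p * x i₀) + p * y k₀ * star (p * y k₀) := by
  calc p = p * (∑ i, x i * star (x i) + ∑ k, y k * star (y k)) * p := by
        rw [hxy, mul_one, hp.isIdempotentElem.eq]
    _ = _ := by
        rw [mul_add, add_mul, hp.isSelfAdjoint.mul_sum_mul_star_mul_eq_single x i₀ hx,
          hp.isSelfAdjoint.mul_sum_mul_star_mul_eq_single y k₀ hy]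

end Conjugation

theorem stmt11_general (D : Type*) [CStarAlgebra D] (M N : ℕ)
    (S : Fin M → D) (T : Fin N → D) (e : Fin M → Fin N → D)
    (heproj : ∀ (i : Fin M) (k : Fin N), e i k * e i k = e i k ∧ star (e i k) = e i k)
    (hSisom : ∀ i j : Fin M, star (S i) * S j = if i = j then 1 else 0)
    (hTisom : ∀ k l : Fin N, star (T k) * T l = if k = l then 1 else 0)
    (hsum : (∑ i, S i * star (S i)) + (∑ k, T k * star (T k)) = 1)
    (heS : ∀ (i : Fin M) (k : Fin N) (j : Fin M),
      e i k * S j = if i = j then ∑ h, S j * e h k else 0)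
    (heT : ∀ (i : Fin M) (k : Fin N) (l : Fin N),
      e i k * T l = if k = l then ∑ m, T l * e i m else 0) :
    ∀ (i : Fin M) (k : Fin N),
      (star (e i k * S i) * (e i k * S i) =
        ∑ j, ((e j k * S j) * star (e j k * S j) + (e j k * T k) * star (e j k * T k))) ∧
      (star (e i k * T k) * (e i k * T k) =
        ∑ l, ((e i l * S i) * star (e i l * S i) + (e i l * T l) * star (e i l * T l))) := by
  have he : ∀ i k, IsStarProjection (e i k) := fun i k => ⟨(heproj i k).1, (heproj i k).2⟩
  have he_eq : ∀ j k,
      e j k = e j k * S j * star (e j k * S j) + e j k * T k * star (e j k * T k) :=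
    fun j k => (he j k).eq_add_of_sum_add_sum_eq_one hsum
      (fun i hij => by rw [heS, if_neg (Ne.symm hij)])
      (fun l hkl => by rw [heT, if_neg (Ne.symm hkl)])
  intro i k
  constructor
  · rw [(he i k).star_mul_mul_self_eq_of_mul_eq (q := ∑ h, e h k) (by simp [hSisom])
      (by rw [heS, if_pos rfl, mul_sum])]
    exact sum_congr rfl fun j _ => he_eq j k
  · rw [(he i k).star_mul_mul_self_eq_of_mul_eq (q := ∑ m, e i m) (by simp [hTisom])
      (by rw [heT, if_pos rfl, mul_sum])]
    exact sum_congr rfl fun l _ => he_eq i l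

/-- With the same relations, the partial isometries `S_{(i,k)} = e_{(i,k)}Sᵢ`,
`T_{(i,k)} = e_{(i,k)}Tₖ` satisfy
`S_{(i,k)}*S_{(i,k)} = ∑ⱼ (S_{(j,k)}S_{(j,k)}* + T_{(j,k)}T_{(j,k)}*)` and
`T_{(i,k)}*T_{(i,k)} = ∑ₗ (S_{(i,l)}S_{(i,l)}* + T_{(i,l)}T_{(i,l)}*)`. -/
theorem stmt11 (D : Type*) [CStarAlgebra D] (M N : ℕ) (hM : 1 < M) (hN : 1 < N)
    (S : Fin M → D) (T : Fin N → D) (e : Fin M → Fin N → D)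
    (heproj : ∀ (i : Fin M) (k : Fin N), e i k * e i k = e i k ∧ star (e i k) = e i k)
    (heorth : ∀ (i j : Fin M) (k l : Fin N), (i, k) ≠ (j, l) → e i k * e j l = 0)
    (hesum : ∑ i, ∑ k, e i k = 1)
    (hSisom : ∀ i j : Fin M, star (S i) * S j = if i = j then 1 else 0)
    (hTisom : ∀ k l : Fin N, star (T k) * T l = if k = l then 1 else 0)
    (hST : ∀ (j : Fin M) (l : Fin N), star (S j) * T l = 0)
    (hsum : (∑ i, S i * star (S i)) + (∑ k, T k * star (T k)) = 1)
    (heS : ∀ (i : Fin M) (k : Fin N) (j : Fin M),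
      e i k * S j = if i = j then ∑ h, S j * e h k else 0)
    (heT : ∀ (i : Fin M) (k : Fin N) (l : Fin N),
      e i k * T l = if k = l then ∑ m, T l * e i m else 0) :
    ∀ (i : Fin M) (k : Fin N),
      (star (e i k * S i) * (e i k * S i) =
        ∑ j, ((e j k * S j) * star (e j k * S j) + (e j k * T k) * star (e j k * T k))) ∧
      (star (e i k * T k) * (e i k * T k) =
        ∑ l, ((e i l * S i) * star (e i l * S i) + (e i l * T l) * star (e i l * T l))) :=
  stmt11_general D M N S T e heproj hSisom hTisom hsum heS heT
end

section
/- Let A_{2,N} = E₂ ⊗ I_N and B_{2,N} = I₂ ⊗ E_N be the 2N × 2N integer matrices, where E_n is the n×n all-ones matrix and I_n the identity. Then the cokernel ℤ^{2N}/(A_{2,N} + B_{2,N} − I_{2N})ℤ^{2N} is isomorphic to ℤ/(N²−1)ℤ, and the kernel of A_{2,N} + B_{2,N} − I_{2N} acting on ℤ^{2N} is trivial. -/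
/-!
Write `s₀ u, s₁ u` for the two row sums of `u ∈ ℤ^{2N}` and `M = A_{2,N} + B_{2,N} - I`. Then
`(M u)(i, j) = u(1 - i, j) + sᵢ u`, so `M` acts on the pair of row sums by `[[N, 1], [1, N]]`,
whose determinant is `N² - 1`. Hence `M u = 0` forces both row sums, and then `u`, to vanish.
The functional `v ↦ s₀ v - N s₁ v (mod N² - 1)` kills `M u`, whose row sums are
`(s₁ u + N s₀ u, s₀ u + N s₁ u)`; conversely, when it kills `v`, one solves for the row sums of a
preimage first and then reads off the preimage entrywise.
-/

open Matrix

/-- The all-ones `m × m` integer matrix `E_m`. -/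
def allOnes (m : ℕ) : Matrix (Fin m) (Fin m) ℤ := Matrix.of fun _ _ => 1

/-- `A_{2,N} = E₂ ⊗ I_N`. -/
def A2N (N : ℕ) : Matrix (Fin 2 × Fin N) (Fin 2 × Fin N) ℤ :=
  Matrix.kroneckerMap (· * ·) (allOnes 2) (1 : Matrix (Fin N) (Fin N) ℤ)

/-- `B_{2,N} = I₂ ⊗ E_N`. -/
def B2N (N : ℕ) : Matrix (Fin 2 × Fin N) (Fin 2 × Fin N) ℤ :=
  Matrix.kroneckerMap (· * ·) (1 : Matrix (Fin 2) (Fin 2) ℤ) (allOnes N)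

def rowSum {R κ ι : Type*} [Semiring R] [Fintype ι] (i : κ) : (κ × ι → R) →ₗ[R] R :=
  ∑ j, LinearMap.proj (i, j)

lemma rowSum_apply {R κ ι : Type*} [Semiring R] [Fintype ι] (i : κ) (u : κ × ι → R) :
    rowSum i u = ∑ j, u (i, j) := by
  simp [rowSum]

section
variable {N : ℕ}

lemma A2N_mulVec_apply (u : Fin 2 × Fin N → ℤ) (i : Fin 2) (j : Fin N) :
    (A2N N *ᵥ u) (i, j) = ∑ i', u (i', j) := by
  simp [A2N, allOnes, mulVec, dotProduct, Fintype.sum_prod_type, one_apply]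

lemma B2N_mulVec_apply (u : Fin 2 × Fin N → ℤ) (i : Fin 2) (j : Fin N) :
    (B2N N *ᵥ u) (i, j) = rowSum i u := by
  fin_cases i <;>
    simp [rowSum_apply, B2N, allOnes, mulVec, dotProduct, Fintype.sum_prod_type, one_apply]

lemma A2N_add_B2N_sub_one_mulVec_apply (u : Fin 2 × Fin N → ℤ) (i : Fin 2) (j : Fin N) :
    ((A2N N + B2N N - 1) *ᵥ u) (i, j) = u (1 - i, j) + rowSum i u := by
  simp only [sub_mulVec, add_mulVec, one_mulVec, Pi.sub_apply, Pi.add_apply, A2N_mulVec_apply,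
    B2N_mulVec_apply, Fin.sum_univ_two]
  match i with
  | 0 => rw [sub_zero]; ring
  | 1 => rw [sub_self]; ring

lemma rowSum_A2N_add_B2N_sub_one_mulVec (u : Fin 2 × Fin N → ℤ) (i : Fin 2) :
    rowSum i ((A2N N + B2N N - 1) *ᵥ u) = rowSum (1 - i) u + N * rowSum i u := by
  simp only [rowSum_apply, A2N_add_B2N_sub_one_mulVec_apply, Finset.sum_add_distrib,
    Finset.sum_const, Finset.card_univ, Fintype.card_fin, nsmul_eq_mul]

lemma ker_mulVecLin_A2N_add_B2N_sub_one (hN : 2 ≤ N) :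
    LinearMap.ker (A2N N + B2N N - 1).mulVecLin = ⊥ := by
  rw [LinearMap.ker_eq_bot']
  intro u hu
  have hrow (i : Fin 2) : rowSum (1 - i) u + N * rowSum i u = 0 := by
    rw [← rowSum_A2N_add_B2N_sub_one_mulVec, ← mulVecLin_apply, hu, map_zero]
  have h0 := hrow 0
  have h1 := hrow 1
  simp only [sub_zero, sub_self] at h0 h1
  have hN' : (N : ℤ) ^ 2 - 1 ≠ 0 := by nlinarith [(by exact_mod_cast hN : (2 : ℤ) ≤ N)]
  have hs0 : rowSum 0 u = 0 :=
    (mul_eq_zero.1 (by linear_combination (N : ℤ) * h0 - h1)).resolve_left hN'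
  have hs1 : rowSum 1 u = 0 := by linear_combination h0 - (N : ℤ) * hs0
  have hs : ∀ i, rowSum i u = 0 := Fin.forall_fin_two.2 ⟨hs0, hs1⟩
  ext ⟨i, j⟩
  have hentry := A2N_add_B2N_sub_one_mulVec_apply u (1 - i) j
  rw [← mulVecLin_apply, hu, sub_sub_cancel, hs] at hentry
  simpa using hentry.symm

def cokerMap (N : ℕ) : (Fin 2 × Fin N → ℤ) →ₗ[ℤ] ZMod (N ^ 2 - 1) :=
  (Int.castAddHom _).toIntLinearMap ∘ₗ (rowSum 0 - (N : ℤ) • rowSum 1)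

lemma cokerMap_eq_zero_iff (hN : 1 ≤ N) (v : Fin 2 × Fin N → ℤ) :
    cokerMap N v = 0 ↔ ∃ k : ℤ, rowSum 0 v - N * rowSum 1 v = ((N : ℤ) ^ 2 - 1) * k := by
  have hcast : ((N ^ 2 - 1 : ℕ) : ℤ) = (N : ℤ) ^ 2 - 1 := by
    rw [Nat.cast_sub (Nat.one_le_pow _ _ hN), Nat.cast_pow, Nat.cast_one]
  change ((rowSum 0 v - N * rowSum 1 v : ℤ) : ZMod (N ^ 2 - 1)) = 0 ↔ _
  rw [ZMod.intCast_zmod_eq_zero_iff_dvd, hcast]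
  rfl

lemma cokerMap_surjective (hN : 1 ≤ N) : Function.Surjective (cokerMap N) := by
  intro z
  obtain ⟨a, rfl⟩ := ZMod.intCast_surjective z
  refine ⟨Pi.single (0, ⟨0, hN⟩) a, ?_⟩
  simp [cokerMap, rowSum_apply, Pi.single_apply]

lemma range_mulVecLin_A2N_add_B2N_sub_one (hN : 1 ≤ N) :
    LinearMap.range (A2N N + B2N N - 1).mulVecLin = LinearMap.ker (cokerMap N) := by
  ext v
  simp only [LinearMap.mem_range, LinearMap.mem_ker, cokerMap_eq_zero_iff hN, mulVecLin_apply]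
  constructor
  · rintro ⟨u, rfl⟩
    refine ⟨-rowSum 1 u, ?_⟩
    rw [rowSum_A2N_add_B2N_sub_one_mulVec, rowSum_A2N_add_B2N_sub_one_mulVec]
    simp only [sub_zero, sub_self]
    ring
  · rintro ⟨k, hk⟩
    set p : Fin 2 × Fin N → ℤ := fun q => v (1 - q.1, q.2) + ![k, -(rowSum 1 v + N * k)] q.1
    have hp0 : rowSum 0 p = rowSum 1 v + N * k := by
      simp [p, rowSum_apply, Finset.sum_add_distrib]
    have hp1 : rowSum 1 p = -k := by
      have : rowSum 1 p = rowSum 0 v - N * (rowSum 1 v + N * k) := by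
        simp only [p, rowSum_apply, sub_self, cons_val_one, cons_val_fin_one,
          Finset.sum_add_distrib, Finset.sum_const, Finset.card_univ, Fintype.card_fin, nsmul_eq_mul]
        ring
      linear_combination this + hk
    refine ⟨p, funext fun ⟨i, j⟩ => ?_⟩
    match i with
    | 0 =>
      rw [A2N_add_B2N_sub_one_mulVec_apply, hp0]
      simp only [p, sub_zero, sub_self, cons_val_one, cons_val_fin_one]
      ring
    | 1 =>
      rw [A2N_add_B2N_sub_one_mulVec_apply, hp1]
      simp [p]
end

/-- `ℤ^{2N}/(A_{2,N} + B_{2,N} − I)ℤ^{2N} ≅ ℤ/(N²−1)ℤ` and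
`Ker(A_{2,N} + B_{2,N} − I) = 0` in `ℤ^{2N}`. -/
theorem stmt12 (N : ℕ) (hN : 2 ≤ N) :
    Nonempty (((Fin 2 × Fin N → ℤ) ⧸
        LinearMap.range (Matrix.mulVecLin (A2N N + B2N N - 1))) ≃+ ZMod (N ^ 2 - 1)) ∧
    LinearMap.ker (Matrix.mulVecLin (A2N N + B2N N - 1)) = ⊥ := by
  have hN1 : 1 ≤ N := by omega
  refine ⟨⟨?_⟩, ker_mulVecLin_A2N_add_B2N_sub_one hN⟩
  exact ((Submodule.quotEquivOfEq _ _ (range_mulVecLin_A2N_add_B2N_sub_one hN1)).trans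
    ((cokerMap N).quotKerEquivOfSurjective (cokerMap_surjective hN1))).toAddEquiv
end

section
/- Let H be a Hilbert C*-quad module of strongly finite type with finite bases {u₁,…,u_M} (right B₁-module) and {e₁,…,e_{M'}} of B₁ as right A-module through ψ₁∘λ₁ (so z = ∑ⱼ eⱼψ₁(λ₁(eⱼ*z)) for z ∈ B₁). Then the family {uᵢφ₁(eⱼ) : 1 ≤ i ≤ M, 1 ≤ j ≤ M'} is a finite basis of H as a right A-module: ξ = ∑_{i,j} uᵢφ₁(eⱼ)·⟨uᵢφ₁(eⱼ)|ξ⟩_A for all ξ ∈ H. -/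
theorem sum_act_innerA_basis_eq_act_inner {ι A B H : Type*} [Fintype ι]
    [NonUnitalNonAssocSemiring B] [Star B] [AddCommGroup H]
    (actA : H → A → H) (act1 : H → B → H) (innerA : H → H → A) (inner1 : H → H → B)
    (psi1 : A → B) (lam1 : B → A) (e : ι → B)
    (hbasise : ∀ z : B, ∑ j, e j * psi1 (lam1 (star (e j) * z)) = z)
    (hlamA : ∀ ξ η : H, lam1 (inner1 ξ η) = innerA ξ η)
    (hact : ∀ (ξ : H) (z : B) (a : A), act1 ξ (z * psi1 a) = actA (act1 ξ z) a)
    (hact_add : ∀ (ξ : H) (x y : B), act1 ξ (x + y) = act1 ξ x + act1 ξ y)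
    (hinnerl : ∀ (ξ η : H) (z : B), inner1 (act1 ξ z) η = star z * inner1 ξ η) (η ξ : H) :
    ∑ j, actA (act1 η (e j)) (innerA (act1 η (e j)) ξ) = act1 η (inner1 η ξ) :=
  calc ∑ j, actA (act1 η (e j)) (innerA (act1 η (e j)) ξ)
      = ∑ j, act1 η (e j * psi1 (lam1 (star (e j) * inner1 η ξ))) := by
        simp only [← hlamA, hinnerl, hact]
    _ = act1 η (∑ j, e j * psi1 (lam1 (star (e j) * inner1 η ξ))) :=
        (map_sum (AddMonoidHom.mk' (act1 η) (hact_add η)) _ _).symm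
    _ = act1 η (inner1 η ξ) := by rw [hbasise]

theorem stmt19_general (A B₁ H : Type*) [CStarAlgebra B₁] [AddCommGroup H]
    (M M' : ℕ)
    (actA : H → A → H) (act1 : H → B₁ → H)
    (innerA : H → H → A) (inner1 : H → H → B₁)
    (psi1 : A → B₁) (lam1 : B₁ → A)
    (u : Fin M → H) (e : Fin M' → B₁)
    -- `u₁,…,u_M` is a finite basis of `H` as a right Hilbert `B₁`-module
    (hbasisu : ∀ ξ : H, ∑ i, act1 (u i) (inner1 (u i) ξ) = ξ)
    -- `e₁,…,e_{M'}` is a finite basis of `B₁` as a right `A`-module through `ψ₁∘λ₁`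
    (hbasise : ∀ z : B₁, ∑ j, e j * psi1 (lam1 (star (e j) * z)) = z)
    -- compatibility of `λ₁` and `ψ₁`, and with the inner products
    (hlamA : ∀ ξ η : H, lam1 (inner1 ξ η) = innerA ξ η)
    -- the right-module structures
    (hact : ∀ (ξ : H) (z : B₁) (a : A), act1 ξ (z * psi1 a) = actA (act1 ξ z) a)
    (hact_add : ∀ (ξ : H) (x y : B₁), act1 ξ (x + y) = act1 ξ x + act1 ξ y)
    (hinnerl : ∀ (ξ η : H) (z : B₁), inner1 (act1 ξ z) η = star z * inner1 ξ η) :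
    ∀ ξ : H, ∑ i, ∑ j, actA (act1 (u i) (e j)) (innerA (act1 (u i) (e j)) ξ) = ξ := by
  intro ξ
  simp only [sum_act_innerA_basis_eq_act_inner actA act1 innerA inner1 psi1 lam1 e hbasise hlamA
    hact hact_add hinnerl]
  exact hbasisu ξ

/-- If `H` is of strongly finite type, with finite basis `u₁,…,u_M` of `H` as a right Hilbert
`B₁`-module and finite basis `e₁,…,e_{M'}` of `B₁` as a right `A`-module through `ψ₁∘λ₁`, then
`{uᵢφ₁(eⱼ)}` is a finite basis of `H` as a right `A`-module:
`ξ = ∑_{i,j} uᵢφ₁(eⱼ)·⟨uᵢφ₁(eⱼ)|ξ⟩_A` for all `ξ ∈ H`. -/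
theorem stmt19 (A B₁ H : Type*) [CStarAlgebra A] [CStarAlgebra B₁] [AddCommGroup H]
    (M M' : ℕ)
    (actA : H → A → H) (act1 : H → B₁ → H)
    (innerA : H → H → A) (inner1 : H → H → B₁)
    (psi1 : A → B₁) (lam1 : B₁ → A)
    (u : Fin M → H) (e : Fin M' → B₁)
    -- `u₁,…,u_M` is a finite basis of `H` as a right Hilbert `B₁`-module
    (hbasisu : ∀ ξ : H, ∑ i, act1 (u i) (inner1 (u i) ξ) = ξ)
    -- `e₁,…,e_{M'}` is a finite basis of `B₁` as a right `A`-module through `ψ₁∘λ₁`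
    (hbasise : ∀ z : B₁, ∑ j, e j * psi1 (lam1 (star (e j) * z)) = z)
    -- compatibility of `λ₁` and `ψ₁`, and with the inner products
    (hlam : ∀ (b : B₁) (a : A), lam1 (b * psi1 a) = lam1 b * a)
    (hlamA : ∀ ξ η : H, lam1 (inner1 ξ η) = innerA ξ η)
    -- the right-module structures
    (hact : ∀ (ξ : H) (z : B₁) (a : A), act1 ξ (z * psi1 a) = actA (act1 ξ z) a)
    (hact_add : ∀ (ξ : H) (x y : B₁), act1 ξ (x + y) = act1 ξ x + act1 ξ y)
    (hinnerl : ∀ (ξ η : H) (z : B₁), inner1 (act1 ξ z) η = star z * inner1 ξ η) :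
    ∀ ξ : H, ∑ i, ∑ j, actA (act1 (u i) (e j)) (innerA (act1 (u i) (e j)) ξ) = ξ :=
  stmt19_general A B₁ H M M' actA act1 innerA inner1 psi1 lam1 u e hbasisu hbasise hlamA hact
    hact_add hinnerl
end
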